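/- arXiv:1508.00489 — 2 statements merged into one kernel-verified Lean document; each statement's English description precedes it below -/
import Mathlib

section
/- Let (b_i)_{i≥0} and (c_i)_{i≥0} be infinite sequences of non-negative real numbers such that for every index i ≥ 0 the following implication is true: if c_i < 1 then b_{i+1} ≤ b_i/(1−c_i) and c_{i+1} ≤ 2·c_i²·[b_i/(1−c_i)]². Suppose b_0 ≥ 1 and ε := 6·b_0²·c_0 ≤ 2/3. Then for every i one has c_i ≤ ε^(2^i)/(6·b_0²) and b_i ≤ √3·b_0; consequently the series Σ_i c_i converges and c_i → 0 as i → ∞. -/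
open Filter Finset

/-! With `ε = 6 b₀² c₀`, the claimed bound `ε ^ 2 ^ i / (6 b₀²)` on `cᵢ` is dominated by the
geometric sequence `(2/3)ⁱ / 9`, whose sum is `1/3`. Iterating `b_{i+1} (1 - cᵢ) ≤ bᵢ` gives
`bᵢ ∏_{j<i} (1 - c_j) ≤ b₀`, and the Weierstrass product inequality
`∏ (1 - c_j) ≥ 1 - ∑ c_j ≥ 2/3` keeps both `bᵢ` and `bᵢ / (1 - cᵢ)` below `(3/2) b₀ ≤ √3 b₀`.
The bound on `bᵢ / (1 - cᵢ)` is what closes the induction for `cᵢ`: squaring doubles the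
exponent, `2 (ε ^ 2 ^ i / (6 b₀²))² ((3/2) b₀)² ≤ ε ^ 2 ^ (i+1) / (6 b₀²)`. -/

lemma pow_two_pow_le_pow_succ {x : ℝ} (h₀ : 0 ≤ x) (h₁ : x ≤ 1) (n : ℕ) :
    x ^ 2 ^ n ≤ x ^ (n + 1) :=
  pow_le_pow_of_le_one h₀ h₁ n.lt_two_pow_self

lemma pow_two_pow_div_le_geometric {ε a : ℝ} (hε₀ : 0 ≤ ε) (hε : ε ≤ 2 / 3) (ha : 1 ≤ a)
    (n : ℕ) : ε ^ 2 ^ n / (6 * a ^ 2) ≤ (2 / 3) ^ n / 9 :=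
  calc ε ^ 2 ^ n / (6 * a ^ 2) ≤ (2 / 3) ^ (n + 1) / 6 := by
        gcongr
        · exact (pow_two_pow_le_pow_succ hε₀ (hε.trans (by norm_num)) n).trans
            (pow_le_pow_left₀ hε₀ hε _)
        · nlinarith
    _ = (2 / 3) ^ n / 9 := by ring

lemma sum_range_le_of_le_geometric {f : ℕ → ℝ} {n : ℕ}
    (hf : ∀ j < n, f j ≤ (2 / 3) ^ j / 9) : ∑ j ∈ range n, f j ≤ 1 / 3 :=
  calc ∑ j ∈ range n, f j ≤ (∑ j ∈ range n, (2 / 3 : ℝ) ^ j) / 9 := by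
        rw [sum_div]
        exact sum_le_sum fun j hj => hf j (mem_range.mp hj)
    _ ≤ (2 / 3) ^ 0 / (1 - 2 / 3) / 9 := by
        gcongr
        rw [range_eq_Ico]
        exact geom_sum_Ico_le_of_lt_one (by norm_num) (by norm_num)
    _ = 1 / 3 := by norm_num

lemma lt_one_of_le_geometric {x : ℝ} {j : ℕ} (h : x ≤ (2 / 3) ^ j / 9) : x < 1 := by
  have : (2 / 3 : ℝ) ^ j ≤ 1 := pow_le_one₀ (by norm_num) (by norm_num)
  linarith

lemma one_sub_sum_le_prod_one_sub {ι : Type*} [DecidableEq ι] {s : Finset ι} {c : ι → ℝ}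
    (hc₀ : ∀ j ∈ s, 0 ≤ c j) (hc₁ : ∀ j ∈ s, c j ≤ 1) :
    1 - ∑ j ∈ s, c j ≤ ∏ j ∈ s, (1 - c j) := by
  induction s using Finset.induction_on with
  | empty => simp
  | insert a s ha ih =>
    rw [sum_insert ha, prod_insert ha]
    have hca₀ := hc₀ a (mem_insert_self a s)
    have hca₁ := hc₁ a (mem_insert_self a s)
    have hS : 0 ≤ ∑ j ∈ s, c j := sum_nonneg fun j hj => hc₀ j (mem_insert_of_mem hj)
    have ih := ih (fun j hj => hc₀ j (mem_insert_of_mem hj))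
      (fun j hj => hc₁ j (mem_insert_of_mem hj))
    calc 1 - (c a + ∑ j ∈ s, c j) ≤ (1 - c a) * (1 - ∑ j ∈ s, c j) := by nlinarith
      _ ≤ (1 - c a) * ∏ j ∈ s, (1 - c j) := by gcongr

lemma mul_prod_one_sub_le {b c : ℕ → ℝ}
    (hrec : ∀ i, c i < 1 → b (i + 1) ≤ b i / (1 - c i)) {n : ℕ} (hc : ∀ j < n, c j < 1) :
    b n * ∏ j ∈ range n, (1 - c j) ≤ b 0 := by
  induction n with
  | zero => simp
  | succ n ih =>
    have hcn : 0 < 1 - c n := sub_pos.mpr (hc n n.lt_succ_self)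
    have hstep : b (n + 1) * (1 - c n) ≤ b n :=
      (le_div_iff₀ hcn).mp (hrec n (hc n n.lt_succ_self))
    have hprod : 0 ≤ ∏ j ∈ range n, (1 - c j) :=
      prod_nonneg fun j hj => (sub_pos.mpr (hc j (by simp at hj; omega))).le
    calc b (n + 1) * ∏ j ∈ range (n + 1), (1 - c j)
        = b (n + 1) * (1 - c n) * ∏ j ∈ range n, (1 - c j) := by rw [prod_range_succ]; ring
      _ ≤ b n * ∏ j ∈ range n, (1 - c j) := by gcongr
      _ ≤ b 0 := ih fun j hj => hc j (hj.trans n.lt_succ_self)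

lemma le_three_halves_mul_of_mul_le {x p y : ℝ} (h : x * p ≤ y) (hp : 2 / 3 ≤ p) (hy : 0 ≤ y) :
    x ≤ 3 / 2 * y :=
  calc x ≤ y / p := (le_div_iff₀ (by linarith)).mpr h
    _ ≤ y / (2 / 3) := div_le_div_of_nonneg_left hy (by norm_num) hp
    _ = 3 / 2 * y := by ring

lemma two_mul_sq_mul_sq_le {a c q e : ℝ} (ha : 0 < a) (hc₀ : 0 ≤ c) (hc : c ≤ e / (6 * a ^ 2))
    (hq₀ : 0 ≤ q) (hq : q ≤ 3 / 2 * a) : 2 * c ^ 2 * q ^ 2 ≤ e ^ 2 / (6 * a ^ 2) :=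
  calc 2 * c ^ 2 * q ^ 2 ≤ 2 * (e / (6 * a ^ 2)) ^ 2 * (3 / 2 * a) ^ 2 := by gcongr
    _ = e ^ 2 / (8 * a ^ 2) := by field_simp; ring
    _ ≤ e ^ 2 / (6 * a ^ 2) := by gcongr; norm_num

lemma two_thirds_le_prod_one_sub {c : ℕ → ℝ} (hc : ∀ i, 0 ≤ c i) {n : ℕ}
    (hgeo : ∀ j < n, c j ≤ (2 / 3) ^ j / 9) : 2 / 3 ≤ ∏ j ∈ range n, (1 - c j) := by
  have hc₁ : ∀ j ∈ range n, c j ≤ 1 := fun j hj =>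
    (lt_one_of_le_geometric (hgeo j (mem_range.mp hj))).le
  have hprod := one_sub_sum_le_prod_one_sub (fun j _ => hc j) hc₁
  have hsum := sum_range_le_of_le_geometric hgeo
  linarith

lemma le_three_halves_mul_of_le_geometric {b c : ℕ → ℝ} (hc : ∀ i, 0 ≤ c i)
    (hrec : ∀ i, c i < 1 → b (i + 1) ≤ b i / (1 - c i)) (hb0 : 0 ≤ b 0) {n : ℕ}
    (hgeo : ∀ j < n, c j ≤ (2 / 3) ^ j / 9) : b n ≤ 3 / 2 * b 0 :=
  le_three_halves_mul_of_mul_le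
    (mul_prod_one_sub_le hrec fun j hj => lt_one_of_le_geometric (hgeo j hj))
    (two_thirds_le_prod_one_sub hc hgeo) hb0

lemma c_le_pow_two_pow {b c : ℕ → ℝ} (hb : ∀ i, 0 ≤ b i) (hc : ∀ i, 0 ≤ c i)
    (hrec : ∀ i, c i < 1 →
      b (i + 1) ≤ b i / (1 - c i) ∧ c (i + 1) ≤ 2 * c i ^ 2 * (b i / (1 - c i)) ^ 2)
    (hb0 : 1 ≤ b 0) (hε : 6 * b 0 ^ 2 * c 0 ≤ 2 / 3) (n : ℕ) :
    c n ≤ (6 * b 0 ^ 2 * c 0) ^ 2 ^ n / (6 * b 0 ^ 2) := by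
  have hb0pos : 0 < b 0 := by linarith
  induction n using Nat.strong_induction_on with
  | _ n ih =>
  cases n with
  | zero => rw [pow_zero, pow_one, mul_div_cancel_left₀ _ (by positivity)]
  | succ n =>
    have hgeo : ∀ j < n + 1, c j ≤ (2 / 3) ^ j / 9 := fun j hj =>
      (ih j hj).trans (pow_two_pow_div_le_geometric (by have := hc 0; positivity) hε hb0 j)
    have hlt : ∀ j < n + 1, c j < 1 := fun j hj => lt_one_of_le_geometric (hgeo j hj)
    have hcn : 0 < 1 - c n := sub_pos.mpr (hlt n n.lt_succ_self)
    obtain ⟨-, hstep⟩ := hrec n (hlt n n.lt_succ_self)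
    have hratio : b n / (1 - c n) * ∏ j ∈ range (n + 1), (1 - c j) ≤ b 0 := by
      rw [prod_range_succ, mul_comm _ (1 - c n), ← mul_assoc, div_mul_cancel₀ _ hcn.ne']
      exact mul_prod_one_sub_le (fun i h => (hrec i h).1)
        fun j hj => hlt j (hj.trans n.lt_succ_self)
    have hratio' := le_three_halves_mul_of_mul_le hratio
      (two_thirds_le_prod_one_sub hc hgeo) hb0pos.le
    calc c (n + 1) ≤ 2 * c n ^ 2 * (b n / (1 - c n)) ^ 2 := hstep
      _ ≤ ((6 * b 0 ^ 2 * c 0) ^ 2 ^ n) ^ 2 / (6 * b 0 ^ 2) :=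
        two_mul_sq_mul_sq_le hb0pos (hc n) (ih n n.lt_succ_self)
          (div_nonneg (hb n) hcn.le) hratio'
      _ = (6 * b 0 ^ 2 * c 0) ^ 2 ^ (n + 1) / (6 * b 0 ^ 2) := by rw [← pow_mul, ← pow_succ]

/-- The infinite-sequence form of the paper's recursive-inequality lemma (Lemma 4). -/
theorem infinite_recursive_inequality_lemma
    (b c : ℕ → ℝ)
    (hb : ∀ i, 0 ≤ b i) (hc : ∀ i, 0 ≤ c i)
    (hrec : ∀ i, c i < 1 →
      b (i + 1) ≤ b i / (1 - c i) ∧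
      c (i + 1) ≤ 2 * c i ^ 2 * (b i / (1 - c i)) ^ 2)
    (hb0 : 1 ≤ b 0)
    (hε : 6 * b 0 ^ 2 * c 0 ≤ 2 / 3) :
    (∀ i, c i ≤ (6 * b 0 ^ 2 * c 0) ^ (2 ^ i) / (6 * b 0 ^ 2) ∧
      b i ≤ Real.sqrt 3 * b 0) ∧
    Summable c ∧ Tendsto c atTop (nhds 0) := by
  have hc_pow := c_le_pow_two_pow hb hc hrec hb0 hε
  have hgeo : ∀ n, c n ≤ (2 / 3) ^ n / 9 := fun n =>
    (hc_pow n).trans (pow_two_pow_div_le_geometric (by have := hc 0; positivity) hε hb0 n)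
  have hsum : Summable c := .of_nonneg_of_le hc hgeo
    ((summable_geometric_of_lt_one (by norm_num) (by norm_num)).div_const 9)
  have hsqrt : 3 / 2 ≤ Real.sqrt 3 := (Real.le_sqrt (by norm_num) (by norm_num)).mpr (by norm_num)
  refine ⟨fun n => ⟨hc_pow n, ?_⟩, hsum, hsum.tendsto_atTop_zero⟩
  calc b n ≤ 3 / 2 * b 0 :=
        le_three_halves_mul_of_le_geometric hc (fun i h => (hrec i h).1) (hb 0) fun j _ => hgeo j
    _ ≤ Real.sqrt 3 * b 0 := by gcongr
end

section
/- Let G be a compact topological group with Haar probability measure ν, E a real Banach space, and λ : G → L(E,E) a continuous unital pseudo-representation with c(λ) < 1. Then the multiplicative average λ̄ satisfies, for all g', g ∈ G, ‖λ̄(g'g) − λ̄(g')∘λ̄(g)‖ ≤ 2·c(λ)²·b(λ)²/[1−c(λ)]²; in particular c(λ̄) ≤ 2·c(λ)²·b(λ)²/[1−c(λ)]². -/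
/-!
Write `T_a(k) = λ(ak) λ(k)⁻¹`, so that `λ̄(a) = ∫ T_a`. Since `λ(k⁻¹)λ(k)` and `λ(k)λ(k⁻¹)`
lie within `C < 1` of `1`, each `λ(k)` is invertible with `‖λ(k)⁻¹‖ ≤ B / (1 - C)`; hence
`T_a(k) = λ(a) + (λ(ak) - λ(a)λ(k)) λ(k)⁻¹` lies within `ε = C B / (1 - C)` of `λ(a)`, and so
does `λ̄(a)`. The cocycle identity `T_{g'}(gk) T_g(k) = T_{g'g}(k)` and left invariance of `ν`
turn the defect into a covariance,
`λ̄(g'g) - λ̄(g')λ̄(g) = ∫ (T_{g'}(gk) - λ(g')) (T_g(k) - λ̄(g)) dν(k)`,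
whose integrand is a product of factors of size `ε` and `2ε`.
-/

open MeasureTheory

/-- The multiplicative average of a pseudo-representation `λ` of a compact group `G`
on a Banach space `E`, relative to a (Haar probability) measure `ν`:
`λ̄(g) := ∫ λ(gk) ∘ λ(k)⁻¹ dν(k)` (Bochner integral). -/
noncomputable def mulAvg {G : Type*} [Group G] [TopologicalSpace G]
    [MeasurableSpace G] {E : Type*} [NormedAddCommGroup E] [NormedSpace ℝ E]
    (ν : Measure G) (lam : G → E →L[ℝ] E) : G → E →L[ℝ] E :=
  fun g => ∫ k, (lam (g * k)).comp (lam k).inverse ∂ν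

theorem isUnit_of_isUnit_mul_of_isUnit_mul {M : Type*} [Monoid M] {a b : M}
    (hba : IsUnit (b * a)) (hab : IsUnit (a * b)) : IsUnit a := by
  obtain ⟨u, hu⟩ := hba
  obtain ⟨v, hv⟩ := hab
  have hl : (↑u⁻¹ * b) * a = 1 := by rw [mul_assoc, ← hu, Units.inv_mul]
  have hr : a * (b * ↑v⁻¹) = 1 := by rw [← mul_assoc, ← hv, Units.mul_inv]
  exact isUnit_iff_exists.2 ⟨_, hr, left_inv_eq_right_inv hl hr ▸ hl⟩

section NormedRing

variable {R : Type*} [NormedRing R]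

theorem norm_le_div_of_mul_eq_one {x w u : R} {c : ℝ} (hxw : x * w = 1)
    (hux : ‖1 - u * x‖ ≤ c) (hc : c < 1) : ‖w‖ ≤ ‖u‖ / (1 - c) := by
  have hw : w = u + (1 - u * x) * w := by
    rw [sub_mul, one_mul, mul_assoc, hxw, mul_one, add_sub_cancel]
  have : ‖w‖ ≤ ‖u‖ + c * ‖w‖ :=
    calc ‖w‖ = ‖u + (1 - u * x) * w‖ := congrArg _ hw
      _ ≤ ‖u‖ + ‖1 - u * x‖ * ‖w‖ := (norm_add_le _ _).trans (by gcongr; exact norm_mul_le _ _)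
      _ ≤ ‖u‖ + c * ‖w‖ := by gcongr
  rw [le_div_iff₀ (by linarith)]
  linarith

theorem isUnit_of_norm_one_sub_lt_one [CompleteSpace R] {x : R} (h : ‖1 - x‖ < 1) :
    IsUnit x := by
  simpa using isUnit_one_sub_of_norm_lt_one h

end NormedRing

section AlmostMultiplicative

variable {G : Type*} [Group G] {R : Type*} [NormedRing R] [CompleteSpace R] {lam : G → R}
  {B C : ℝ}

theorem isUnit_of_norm_map_mul_sub_mul_le (hunital : lam 1 = 1)
    (hC : ∀ a b, ‖lam (a * b) - lam a * lam b‖ ≤ C) (hC1 : C < 1) (k : G) : IsUnit (lam k) := by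
  refine isUnit_of_isUnit_mul_of_isUnit_mul (b := lam k⁻¹)
    (isUnit_of_norm_one_sub_lt_one ?_) (isUnit_of_norm_one_sub_lt_one ?_)
  · simpa [hunital, norm_sub_rev] using (hC k⁻¹ k).trans_lt hC1
  · simpa [hunital, norm_sub_rev] using (hC k k⁻¹).trans_lt hC1

theorem norm_ringInverse_le (hunital : lam 1 = 1) (hB : ∀ h, ‖lam h‖ ≤ B)
    (hC : ∀ a b, ‖lam (a * b) - lam a * lam b‖ ≤ C) (hC1 : C < 1) (k : G) :
    ‖Ring.inverse (lam k)‖ ≤ B / (1 - C) := by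
  have hux : ‖1 - lam k⁻¹ * lam k‖ ≤ C := by simpa [hunital] using hC k⁻¹ k
  calc ‖Ring.inverse (lam k)‖ ≤ ‖lam k⁻¹‖ / (1 - C) :=
        norm_le_div_of_mul_eq_one
          (Ring.mul_inverse_cancel _ (isUnit_of_norm_map_mul_sub_mul_le hunital hC hC1 k)) hux hC1
    _ ≤ B / (1 - C) := div_le_div_of_nonneg_right (hB _) (by linarith)

theorem norm_map_mul_mul_ringInverse_sub_le (hunital : lam 1 = 1) (hB : ∀ h, ‖lam h‖ ≤ B)
    (hC : ∀ a b, ‖lam (a * b) - lam a * lam b‖ ≤ C) (hC1 : C < 1) (a k : G) :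
    ‖lam (a * k) * Ring.inverse (lam k) - lam a‖ ≤ C * (B / (1 - C)) := by
  have hk := Ring.mul_inverse_cancel _ (isUnit_of_norm_map_mul_sub_mul_le hunital hC hC1 k)
  calc ‖lam (a * k) * Ring.inverse (lam k) - lam a‖
      = ‖(lam (a * k) - lam a * lam k) * Ring.inverse (lam k)‖ := by
        rw [sub_mul, mul_assoc, hk, mul_one]
    _ ≤ ‖lam (a * k) - lam a * lam k‖ * ‖Ring.inverse (lam k)‖ := norm_mul_le _ _
    _ ≤ C * (B / (1 - C)) := by
        gcongr
        · exact (norm_nonneg _).trans (hC 1 1)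
        · exact hC a k
        · exact norm_ringInverse_le hunital hB hC hC1 k

end AlmostMultiplicative

theorem norm_integral_sub_le_of_forall_norm_sub_le {X E : Type*} [MeasurableSpace X]
    [NormedAddCommGroup E] [NormedSpace ℝ E] [CompleteSpace E] {μ : Measure X}
    [IsProbabilityMeasure μ] {f : X → E} (hf : Integrable f μ) {a : E} {ε : ℝ}
    (h : ∀ x, ‖f x - a‖ ≤ ε) :
    ‖∫ x, f x ∂μ - a‖ ≤ ε := by
  have hcenter : ∫ x, f x ∂μ - a = ∫ x, (f x - a) ∂μ := by
    rw [integral_sub hf (integrable_const a), integral_const, probReal_univ, one_smul]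
  simpa [hcenter] using norm_integral_le_of_norm_le_const (μ := μ) (ae_of_all _ h)

theorem integral_sub_mul_sub_integral {X A : Type*} [MeasurableSpace X] [NormedRing A]
    [NormedSpace ℝ A] [CompleteSpace A] [IsScalarTower ℝ A A] [SMulCommClass ℝ A A]
    {μ : Measure X} [IsProbabilityMeasure μ] {φ ψ : X → A} (hφ : Integrable φ μ)
    (hψ : Integrable ψ μ) (hφψ : Integrable (fun x => φ x * ψ x) μ) (a : A) :
    ∫ x, (φ x - a) * (ψ x - ∫ y, ψ y ∂μ) ∂μ
      = ∫ x, φ x * ψ x ∂μ - (∫ x, φ x ∂μ) * ∫ x, ψ x ∂μ := by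
  set Q := ∫ y, ψ y ∂μ
  have hψQ : Integrable (fun x => ψ x - Q) μ := hψ.sub (integrable_const Q)
  have hmean : ∫ x, (ψ x - Q) ∂μ = 0 := by
    rw [integral_sub hψ (integrable_const Q), integral_const, probReal_univ, one_smul, sub_self]
  have hφψQ : Integrable (fun x => φ x * ψ x - φ x * Q) μ := hφψ.sub (hφ.mul_const Q)
  have hexpand : ∀ x, (φ x - a) * (ψ x - Q) = (φ x * ψ x - φ x * Q) - a * (ψ x - Q) := by
    intro x; noncomm_ring
  simp_rw [hexpand]
  rw [integral_sub hφψQ (hψQ.const_mul a), integral_sub hφψ (hφ.mul_const Q),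
    integral_mul_const_of_integrable hφ, integral_const_mul_of_integrable hψQ, hmean, mul_zero,
    sub_zero]

theorem Continuous.ringInverse {X R : Type*} [TopologicalSpace X] [NormedRing R]
    [CompleteSpace R] {f : X → R} (hf : Continuous f) (hu : ∀ x, IsUnit (f x)) :
    Continuous fun x => Ring.inverse (f x) :=
  continuous_iff_continuousAt.2 fun x =>
    ((hu x).unit_spec ▸ NormedRing.inverse_continuousAt (hu x).unit).comp hf.continuousAt

theorem continuous_map_mul_mul_ringInverse {G A : Type*} [Mul G] [TopologicalSpace G]
    [ContinuousMul G] [NormedRing A] [CompleteSpace A] {lam : G → A} (hcont : Continuous lam)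
    (hunit : ∀ k, IsUnit (lam k)) (a : G) :
    Continuous fun k => lam (a * k) * Ring.inverse (lam k) :=
  (hcont.comp (continuous_const_mul a)).mul (hcont.ringInverse hunit)

noncomputable def ringMulAvg {G A : Type*} [Group G] [MeasurableSpace G] [NormedRing A]
    [NormedSpace ℝ A] (ν : Measure G) (lam : G → A) (g : G) : A :=
  ∫ k, lam (g * k) * Ring.inverse (lam k) ∂ν

section RingMulAvg

variable {G : Type*} [Group G] [TopologicalSpace G] [ContinuousMul G] [CompactSpace G]
  [MeasurableSpace G] [BorelSpace G] {ν : Measure G} [IsProbabilityMeasure ν]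
  {A : Type*} [NormedRing A] [NormedAlgebra ℝ A] [CompleteSpace A] {lam : G → A} {ε : ℝ}

theorem norm_ringMulAvg_sub_le (hcont : Continuous lam) (hunit : ∀ k, IsUnit (lam k))
    (hnear : ∀ a k, ‖lam (a * k) * Ring.inverse (lam k) - lam a‖ ≤ ε) (a : G) :
    ‖ringMulAvg ν lam a - lam a‖ ≤ ε :=
  norm_integral_sub_le_of_forall_norm_sub_le
    ((continuous_map_mul_mul_ringInverse hcont hunit a).integrable_of_hasCompactSupport
      (.of_compactSpace _)) (hnear a)

theorem norm_ringMulAvg_mul_sub_mul_le [ν.IsMulLeftInvariant] (hcont : Continuous lam)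
    (hunit : ∀ k, IsUnit (lam k))
    (hnear : ∀ a k, ‖lam (a * k) * Ring.inverse (lam k) - lam a‖ ≤ ε) (g' g : G) :
    ‖ringMulAvg ν lam (g' * g) - ringMulAvg ν lam g' * ringMulAvg ν lam g‖ ≤ 2 * ε ^ 2 := by
  set T : G → G → A := fun a k => lam (a * k) * Ring.inverse (lam k)
  have hT : ∀ a, Continuous (T a) := continuous_map_mul_mul_ringInverse hcont hunit
  have hint : ∀ {f : G → A}, Continuous f → Integrable f ν := fun hf =>
    hf.integrable_of_hasCompactSupport (.of_compactSpace _)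
  have hφ : Continuous fun k => T g' (g * k) := (hT g').comp (continuous_const_mul g)
  have hcocycle : ∀ k, T g' (g * k) * T g k = T (g' * g) k := fun k => by
    simp only [T, mul_assoc, Ring.inverse_mul_cancel_left _ _ (hunit (g * k))]
  have hidentity : ringMulAvg ν lam (g' * g) - ringMulAvg ν lam g' * ringMulAvg ν lam g
      = ∫ k, (T g' (g * k) - lam g') * (T g k - ringMulAvg ν lam g) ∂ν := by
    show _ = ∫ k, (T g' (g * k) - lam g') * (T g k - ∫ y, T g y ∂ν) ∂ν
    rw [integral_sub_mul_sub_integral (hint hφ) (hint (hT g)) (hint (hφ.mul (hT g))),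
      integral_mul_left_eq_self (T g') g]
    simp only [hcocycle]
    rfl
  have hbound :
      ∀ k, ‖(T g' (g * k) - lam g') * (T g k - ringMulAvg ν lam g)‖ ≤ ε * (2 * ε) := by
    intro k
    have hε : 0 ≤ ε := (norm_nonneg _).trans (hnear 1 1)
    have hψ : ‖T g k - ringMulAvg ν lam g‖ ≤ 2 * ε :=
      calc ‖T g k - ringMulAvg ν lam g‖
          ≤ ‖T g k - lam g‖ + ‖lam g - ringMulAvg ν lam g‖ := norm_sub_le_norm_sub_add_norm_sub ..
        _ ≤ 2 * ε := by
          rw [norm_sub_rev (lam g)]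
          linarith [hnear g k, norm_ringMulAvg_sub_le (ν := ν) hcont hunit hnear g]
    calc _ ≤ ‖T g' (g * k) - lam g'‖ * ‖T g k - ringMulAvg ν lam g‖ := norm_mul_le _ _
      _ ≤ ε * (2 * ε) := by
        gcongr
        · simpa only [T, mul_assoc] using hnear g' (g * k)
  rw [hidentity]
  calc _ ≤ ε * (2 * ε) := by
        simpa using norm_integral_le_of_norm_le_const (μ := ν) (ae_of_all _ hbound)
    _ = 2 * ε ^ 2 := by ring

end RingMulAvg

theorem mulAvg_eq_ringMulAvg {G : Type*} [Group G] [TopologicalSpace G] [MeasurableSpace G]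
    {E : Type*} [NormedAddCommGroup E] [NormedSpace ℝ E] (ν : Measure G)
    (lam : G → E →L[ℝ] E) : mulAvg ν lam = ringMulAvg ν lam := by
  funext g
  simp only [mulAvg, ringMulAvg, ContinuousLinearMap.ringInverse_eq_inverse,
    ContinuousLinearMap.mul_def]

/-- The paper's estimate (6): averaging quadratically improves the
multiplicativity defect, `c(λ̄) ≤ 2 c(λ)² b(λ)² / (1 - c(λ))²`. -/
theorem mulAvg_multiplicativity_defect_bound
    {G : Type*} [Group G] [TopologicalSpace G] [IsTopologicalGroup G]
    [CompactSpace G] [MeasurableSpace G] [BorelSpace G]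
    (ν : Measure G) [ν.IsHaarMeasure] [IsProbabilityMeasure ν]
    {E : Type*} [NormedAddCommGroup E] [NormedSpace ℝ E] [CompleteSpace E]
    (lam : G → E →L[ℝ] E) (hcont : Continuous lam)
    (hunital : lam 1 = ContinuousLinearMap.id ℝ E)
    (B : ℝ) (hB : ∀ h : G, ‖lam h‖ ≤ B)
    (C : ℝ) (hC : ∀ g' g : G, ‖lam (g' * g) - (lam g').comp (lam g)‖ ≤ C)
    (hC1 : C < 1) :
    ∀ g' g : G,
      ‖mulAvg ν lam (g' * g) - (mulAvg ν lam g').comp (mulAvg ν lam g)‖ ≤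
        2 * C ^ 2 * B ^ 2 / (1 - C) ^ 2 := by
  intro g' g
  have hone : lam 1 = 1 := hunital
  have hmul : ∀ a b, ‖lam (a * b) - lam a * lam b‖ ≤ C := hC
  rw [mulAvg_eq_ringMulAvg, ← ContinuousLinearMap.mul_def]
  calc _ ≤ 2 * (C * (B / (1 - C))) ^ 2 :=
        norm_ringMulAvg_mul_sub_mul_le hcont (isUnit_of_norm_map_mul_sub_mul_le hone hmul hC1)
          (norm_map_mul_mul_ringInverse_sub_le hone hB hmul hC1) g' g
    _ = 2 * C ^ 2 * B ^ 2 / (1 - C) ^ 2 := by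
        rw [mul_div_assoc', div_pow]
        ring
end
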